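/- arXiv:1610.00298 — 3 statements merged into one kernel-verified Lean document; each statement's English description precedes it below -/
import Mathlib

section
/- Let I ⊆ k[x_1,…,x_n] be an ideal, π : k[x_1,…,x_n] → A := k[x_1,…,x_n]/I the quotient map, > a monomial order such that the images under π of the standard monomials (the monomials not lying in in_>(I)) form a k-basis of A, and M ∈ ℚ^{r×n} with in_>(in_M(I)) = in_>(I), where ℚ^r carries the lexicographic order ≻. Let f ∈ A be nonzero and write f = Σ_α c_α π(x^α), the sum over standard monomials x^α. Then the weight quasivaluation of f is attained and given by v_M(f) = min_≻{Mα : c_α ≠ 0}; that is, max_≻{ṽ_M(p) : p ∈ k[x_1,…,x_n], π(p) = f} exists and equals min_≻{Mα : c_α ≠ 0}. In particular the standard monomial basis is adapted to v_M. -/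
open MvPolynomial

instance finWellFoundedLT {r : ℕ} : WellFoundedLT (Fin r) := Finite.to_wellFoundedLT

/-- The initial form of a polynomial with respect to a comparison `le` on exponent vectors:
the sum of the terms of `f` whose exponent is `le`-minimal in the support of `f`. -/
noncomputable def initialForm {k : Type} [Field k] {n : ℕ}
    (le : (Fin n →₀ ℕ) → (Fin n →₀ ℕ) → Prop)
    (f : MvPolynomial (Fin n) k) : MvPolynomial (Fin n) k :=
  letI := Classical.decPred fun α : Fin n →₀ ℕ => ∀ β ∈ f.support, le α β
  ∑ α ∈ f.support.filter (fun α => ∀ β ∈ f.support, le α β),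
    monomial α (MvPolynomial.coeff α f)

/-- The initial ideal of `I`: the ideal generated by initial forms of nonzero elements of `I`. -/
noncomputable def initialIdeal {k : Type} [Field k] {n : ℕ}
    (le : (Fin n →₀ ℕ) → (Fin n →₀ ℕ) → Prop)
    (I : Ideal (MvPolynomial (Fin n) k)) : Ideal (MvPolynomial (Fin n) k) :=
  Ideal.span {g | ∃ f ∈ I, f ≠ 0 ∧ g = initialForm le f}

/-- The weight `Mα ∈ ℚ^r` of an exponent vector `α` under the weighting matrix `M`. -/
def mwt {n r : ℕ} (M : Matrix (Fin r) (Fin n) ℚ) (α : Fin n →₀ ℕ) : Fin r → ℚ :=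
  fun i => ∑ j, M i j * (α j : ℚ)

/-- Comparison of exponents by `M`-weight, in the lexicographic order on `ℚ^r`. -/
def mLe {n r : ℕ} (M : Matrix (Fin r) (Fin n) ℚ) : (Fin n →₀ ℕ) → (Fin n →₀ ℕ) → Prop :=
  fun α β => toLex (mwt M α) ≤ toLex (mwt M β)

/-- The weight `u·α ∈ ℚ` of an exponent vector under a single weight vector `u ∈ ℚ^n`. -/
def uwt {n : ℕ} (u : Fin n → ℚ) (α : Fin n →₀ ℕ) : ℚ := ∑ j, u j * (α j : ℚ)

/-- Comparison of exponents by `u`-weight. -/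
def uLe {n : ℕ} (u : Fin n → ℚ) : (Fin n →₀ ℕ) → (Fin n →₀ ℕ) → Prop :=
  fun α β => uwt u α ≤ uwt u β

/-- A monomial order on `k[x₁,…,xₙ]` in the MIN convention: a total order on exponent
vectors compatible with addition in which `0` (the monomial `1`) is the greatest element. -/
structure MinMonomialOrder (n : ℕ) where
  le : (Fin n →₀ ℕ) → (Fin n →₀ ℕ) → Prop
  total : ∀ a b, le a b ∨ le b a
  antisymm : ∀ a b, le a b → le b a → a = b
  trans : ∀ a b c, le a b → le b c → le a c
  add_le_add : ∀ a b c, le a b → le (a + c) (b + c)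
  le_zero : ∀ a, le a 0

/-!
Every `f ∈ A` has a canonical lift, its expansion `q` in standard monomials, and no lift has a
larger `ṽ_M`. Indeed, let `p` be a lift all of whose exponents have weight `⪰ a`. Then
`p - q ∈ I`, and if some exponent of `q` had weight `≺ a`, the `M`-initial form of `p - q` would
involve only exponents of `q`; its `>`-initial term lies in `in_>(in_M(I)) = in_>(I)`, so it would
be a non-standard exponent of `q`, which is absurd. Hence `q` has all weights `⪰ a` as well: this
is at once the adaptedness of the basis and the formula for `v_M`.
-/

theorem Finset.exists_mem_forall_rel_of_total {α : Type*} {r : α → α → Prop}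
    (total : ∀ a b, r a b ∨ r b a) (trans : ∀ a b c, r a b → r b c → r a c)
    {s : Finset α} (hs : s.Nonempty) : ∃ a ∈ s, ∀ b ∈ s, r a b := by
  classical
  have refl a : r a a := (total a a).elim id id
  induction hs using Finset.Nonempty.cons_induction with
  | singleton a => exact ⟨a, mem_singleton_self a, fun b hb => mem_singleton.1 hb ▸ refl a⟩
  | cons a s _ _ ih =>
    obtain ⟨m, hm, hmin⟩ := ih
    rcases total a m with ham | hma
    · exact ⟨a, mem_cons_self a s, fun b hb =>
        (mem_cons.1 hb).elim (fun h => h ▸ refl a) (fun hb => trans _ _ _ ham (hmin b hb))⟩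
    · exact ⟨m, mem_cons_of_mem hm, fun b hb => (mem_cons.1 hb).elim (fun h => h ▸ hma) (hmin b)⟩

section InitialForm

variable {k : Type} [Field k] {n : ℕ} (le : (Fin n →₀ ℕ) → (Fin n →₀ ℕ) → Prop)

open Classical in
theorem coeff_initialForm (f : MvPolynomial (Fin n) k) (α : Fin n →₀ ℕ) :
    coeff α (initialForm le f) = if ∀ β ∈ f.support, le α β then coeff α f else 0 := by
  rw [initialForm, coeff_sum]
  simp only [coeff_monomial, Finset.sum_ite_eq', Finset.mem_filter]
  by_cases hα : α ∈ f.support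
  · simp [hα]
  · simp [notMem_support_iff.1 hα]

theorem mem_support_initialForm_iff {f : MvPolynomial (Fin n) k} {α : Fin n →₀ ℕ} :
    α ∈ (initialForm le f).support ↔ α ∈ f.support ∧ ∀ β ∈ f.support, le α β := by
  classical
  rw [mem_support_iff, coeff_initialForm, mem_support_iff]
  split_ifs with h
  · exact ⟨fun h0 => ⟨h0, h⟩, And.left⟩
  · exact ⟨fun h0 => (h0 rfl).elim, fun h' => (h h'.2).elim⟩

theorem initialForm_eq_monomial (antisymm : ∀ a b, le a b → le b a → a = b)
    {f : MvPolynomial (Fin n) k} {γ : Fin n →₀ ℕ} (hγ : γ ∈ f.support)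
    (hmin : ∀ β ∈ f.support, le γ β) : initialForm le f = monomial γ (coeff γ f) := by
  classical
  ext β
  rw [coeff_initialForm, coeff_monomial]
  by_cases hβ : γ = β
  · subst hβ
    rw [if_pos hmin, if_pos rfl]
  · rw [if_neg hβ, ite_eq_right_iff]
    intro hβmin
    by_contra h0
    exact hβ (antisymm _ _ (hmin β (mem_support_iff.2 h0)) (hβmin γ hγ))

theorem initialForm_mem_initialIdeal {I : Ideal (MvPolynomial (Fin n) k)}
    {f : MvPolynomial (Fin n) k} (hf : f ∈ I) (hf0 : f ≠ 0) :
    initialForm le f ∈ initialIdeal le I :=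
  Ideal.subset_span ⟨f, hf, hf0, rfl⟩

end InitialForm

theorem MinMonomialOrder.exists_monomial_mem_initialIdeal {k : Type} [Field k] {n : ℕ}
    (mo : MinMonomialOrder n) {J : Ideal (MvPolynomial (Fin n) k)} {h : MvPolynomial (Fin n) k}
    (hJ : h ∈ J) (h0 : h ≠ 0) : ∃ γ ∈ h.support, monomial γ (1 : k) ∈ initialIdeal mo.le J := by
  obtain ⟨γ, hγ, hmin⟩ :=
    Finset.exists_mem_forall_rel_of_total mo.total mo.trans (support_nonempty.2 h0)
  refine ⟨γ, hγ, ?_⟩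
  have hterm : monomial γ (coeff γ h) ∈ initialIdeal mo.le J :=
    initialForm_eq_monomial mo.le mo.antisymm hγ hmin ▸ initialForm_mem_initialIdeal mo.le hJ h0
  have hone : monomial γ (1 : k) = C (coeff γ h)⁻¹ * monomial γ (coeff γ h) := by
    rw [C_mul_monomial, inv_mul_cancel₀ (mem_support_iff.1 hγ)]
  rw [hone]
  exact Ideal.mul_mem_left _ _ hterm

section Weight

variable {k : Type} [Field k] {n : ℕ} {I : Ideal (MvPolynomial (Fin n) k)}
  {Γ : Type*} [LinearOrder Γ] (w : (Fin n →₀ ℕ) → Γ) (mo : MinMonomialOrder n)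

theorem initialForm_weight_ne_zero {f : MvPolynomial (Fin n) k} (hf : f ≠ 0) :
    initialForm (fun α β => w α ≤ w β) f ≠ 0 := by
  obtain ⟨γ, hγ, hmin⟩ := f.support.exists_min_image w (support_nonempty.2 hf)
  exact support_nonempty.1 ⟨_, (mem_support_initialForm_iff _).2 ⟨hγ, hmin⟩⟩

theorem exists_min_weight_monomial_mem_initialIdeal
    (hGR : initialIdeal mo.le (initialIdeal (fun α β => w α ≤ w β) I) = initialIdeal mo.le I)
    {g : MvPolynomial (Fin n) k} (hg : g ∈ I) (hg0 : g ≠ 0) :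
    ∃ γ ∈ g.support, (∀ β ∈ g.support, w γ ≤ w β) ∧ monomial γ (1 : k) ∈ initialIdeal mo.le I := by
  obtain ⟨γ, hγ, hγI⟩ := mo.exists_monomial_mem_initialIdeal
    (initialForm_mem_initialIdeal _ hg hg0) (initialForm_weight_ne_zero w hg0)
  rw [hGR] at hγI
  obtain ⟨hγg, hmin⟩ := (mem_support_initialForm_iff _).1 hγ
  exact ⟨γ, hγg, hmin, hγI⟩

theorem weight_ge_of_sub_mem
    (hGR : initialIdeal mo.le (initialIdeal (fun α β => w α ≤ w β) I) = initialIdeal mo.le I)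
    {a : Γ} {p q : MvPolynomial (Fin n) k} (hpq : p - q ∈ I)
    (hq : ∀ α ∈ q.support, monomial α (1 : k) ∉ initialIdeal mo.le I)
    (hp : ∀ α ∈ p.support, a ≤ w α) : ∀ α ∈ q.support, a ≤ w α := by
  intro α₀ hα₀
  by_contra! hlt
  have coeff_p : ∀ γ, w γ < a → coeff γ p = 0 := fun γ hγ =>
    notMem_support_iff.1 fun hmem => (hp γ hmem).not_gt hγ
  have hα₀pq : α₀ ∈ (p - q).support := by
    rw [mem_support_iff, coeff_sub, coeff_p α₀ hlt, zero_sub, neg_ne_zero]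
    exact mem_support_iff.1 hα₀
  obtain ⟨γ, hγ, hmin, hγI⟩ :=
    exists_min_weight_monomial_mem_initialIdeal w mo hGR hpq (support_nonempty.1 ⟨_, hα₀pq⟩)
  refine hq γ ?_ hγI
  rw [mem_support_iff, coeff_sub, coeff_p γ ((hmin α₀ hα₀pq).trans_lt hlt), zero_sub,
    neg_ne_zero] at hγ
  exact mem_support_iff.2 hγ

end Weight

section StandardLift

variable {k : Type} [Field k] {n : ℕ} {I : Ideal (MvPolynomial (Fin n) k)}
  {P : (Fin n →₀ ℕ) → Prop} (bas : Module.Basis {α // P α} k (MvPolynomial (Fin n) k ⧸ I))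

noncomputable def standardLift (f : MvPolynomial (Fin n) k ⧸ I) : MvPolynomial (Fin n) k :=
  Finsupp.linearCombination k (fun s : {α // P α} => monomial s.1 (1 : k)) (bas.repr f)

theorem mk_standardLift (hbas : ∀ s, bas s = Ideal.Quotient.mk I (monomial s.1 (1 : k)))
    (f : MvPolynomial (Fin n) k ⧸ I) : Ideal.Quotient.mk I (standardLift bas f) = f := by
  rw [standardLift, ← Ideal.Quotient.mkₐ_eq_mk k, ← AlgHom.coe_toLinearMap,
    Finsupp.apply_linearCombination]
  have hcomp : (Ideal.Quotient.mkₐ k I).toLinearMap ∘ (fun s : {α // P α} => monomial s.1 (1 : k))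
      = bas := funext fun s => (hbas s).symm
  rw [hcomp, bas.linearCombination_repr]

theorem coeff_standardLift (f : MvPolynomial (Fin n) k ⧸ I) (s : {α // P α}) :
    coeff s.1 (standardLift bas f) = bas.repr f s := by
  classical
  rw [standardLift, Finsupp.linearCombination_apply, Finsupp.sum, coeff_sum]
  simp [coeff_monomial, Subtype.val_inj, eq_comm]

theorem exists_repr_of_mem_support_standardLift {f : MvPolynomial (Fin n) k ⧸ I}
    {α : Fin n →₀ ℕ} (hα : α ∈ (standardLift bas f).support) :
    ∃ s ∈ (bas.repr f).support, s.1 = α := by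
  classical
  by_contra! h
  rw [mem_support_iff, standardLift, Finsupp.linearCombination_apply, Finsupp.sum, coeff_sum] at hα
  refine hα (Finset.sum_eq_zero fun s hs => ?_)
  simp [coeff_monomial, h s hs]

end StandardLift

section StandardMonomialBasis

variable {k : Type} [Field k] {n : ℕ} {I : Ideal (MvPolynomial (Fin n) k)}
  {mo : MinMonomialOrder n}
  (bas : Module.Basis {α // monomial α (1 : k) ∉ initialIdeal mo.le I} k
    (MvPolynomial (Fin n) k ⧸ I))
  {Γ : Type*} [LinearOrder Γ] (w : (Fin n →₀ ℕ) → Γ)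

theorem weight_ge_on_repr_support_iff
    (hbas : ∀ s, bas s = Ideal.Quotient.mk I (monomial s.1 (1 : k)))
    (hGR : initialIdeal mo.le (initialIdeal (fun α β => w α ≤ w β) I) = initialIdeal mo.le I)
    (a : Γ) (g : MvPolynomial (Fin n) k ⧸ I) :
    (∀ s ∈ (bas.repr g).support, a ≤ w s.1) ↔
      ∃ p : MvPolynomial (Fin n) k, Ideal.Quotient.mk I p = g ∧ ∀ α ∈ p.support, a ≤ w α := by
  constructor
  · intro h
    refine ⟨standardLift bas g, mk_standardLift bas hbas g, fun α hα => ?_⟩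
    obtain ⟨s, hs, rfl⟩ := exists_repr_of_mem_support_standardLift bas hα
    exact h s hs
  · rintro ⟨p, rfl, hp⟩ s hs
    have hpq : p - standardLift bas (Ideal.Quotient.mk I p) ∈ I :=
      Ideal.Quotient.eq.1 (mk_standardLift bas hbas _).symm
    have hstd : ∀ α ∈ (standardLift bas (Ideal.Quotient.mk I p)).support,
        monomial α (1 : k) ∉ initialIdeal mo.le I := fun α hα => by
      obtain ⟨s, -, rfl⟩ := exists_repr_of_mem_support_standardLift bas hα
      exact s.2
    refine weight_ge_of_sub_mem w mo hGR hpq hstd hp s.1 ?_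
    rw [mem_support_iff, coeff_standardLift]
    exact Finsupp.mem_support_iff.1 hs

theorem mem_span_standardMonomials_iff
    (hbas : ∀ s, bas s = Ideal.Quotient.mk I (monomial s.1 (1 : k)))
    (hGR : initialIdeal mo.le (initialIdeal (fun α β => w α ≤ w β) I) = initialIdeal mo.le I)
    (a : Γ) (g : MvPolynomial (Fin n) k ⧸ I) :
    g ∈ Submodule.span k {x | ∃ α : Fin n →₀ ℕ, monomial α (1 : k) ∉ initialIdeal mo.le I ∧
        a ≤ w α ∧ x = Ideal.Quotient.mk I (monomial α (1 : k))} ↔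
      ∃ p : MvPolynomial (Fin n) k, Ideal.Quotient.mk I p = g ∧ ∀ α ∈ p.support, a ≤ w α := by
  have hset : {x | ∃ α : Fin n →₀ ℕ, monomial α (1 : k) ∉ initialIdeal mo.le I ∧
      a ≤ w α ∧ x = Ideal.Quotient.mk I (monomial α (1 : k))} = bas '' {s | a ≤ w s.1} := by
    ext x
    constructor
    · rintro ⟨α, hα, ha, rfl⟩
      exact ⟨⟨α, hα⟩, ha, hbas _⟩
    · rintro ⟨s, hs, rfl⟩
      exact ⟨s.1, s.2, hs, hbas s⟩
  rw [hset, bas.mem_span_image, ← weight_ge_on_repr_support_iff bas w hbas hGR]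
  rfl

end StandardMonomialBasis

/-- **Computation of a weight quasivaluation by a standard monomial basis**
(Proposition `prop-st-monomial-adapted-basis`).  Suppose the images of the standard monomials
(those not in `in_>(I)`) form a basis of `A = k[x]/I` and `in_>(in_M(I)) = in_>(I)`.  If
`f ≠ 0` has expansion `f = Σ c_α π(x^α)` over standard monomials, then the maximum over all
lifts `p` of `f` of `ṽ_M(p)` is attained and equals `min {Mα : c_α ≠ 0}`.  In particular
the standard monomial basis is adapted to `v_M`. -/
theorem stmt_14 {k : Type} [Field k] {n r : ℕ}
    (I : Ideal (MvPolynomial (Fin n) k)) (mo : MinMonomialOrder n)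
    (bas : Module.Basis {α : Fin n →₀ ℕ // MvPolynomial.monomial α (1 : k) ∉ initialIdeal mo.le I}
      k (MvPolynomial (Fin n) k ⧸ I))
    (hbas : ∀ s, bas s = Ideal.Quotient.mk I (MvPolynomial.monomial s.1 (1 : k)))
    (M : Matrix (Fin r) (Fin n) ℚ)
    (hGR : initialIdeal mo.le (initialIdeal (mLe M) I) = initialIdeal mo.le I)
    (f : MvPolynomial (Fin n) k ⧸ I) (hf : f ≠ 0) :
    (∃ α₀, (bas.repr f) α₀ ≠ 0 ∧
      (∀ β, (bas.repr f) β ≠ 0 → toLex (mwt M α₀.1) ≤ toLex (mwt M β.1)) ∧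
      -- the maximum defining `v_M f` is attained at a lift realizing `min {Mα : c_α ≠ 0}` …
      (∃ p : MvPolynomial (Fin n) k, Ideal.Quotient.mk I p = f ∧
        (∀ α ∈ p.support, toLex (mwt M α₀.1) ≤ toLex (mwt M α)) ∧
        (∃ α ∈ p.support, toLex (mwt M α) = toLex (mwt M α₀.1))) ∧
      -- … and every lift has `ṽ_M`-value at most `min {Mα : c_α ≠ 0}`:
      (∀ p : MvPolynomial (Fin n) k, Ideal.Quotient.mk I p = f →
        ∃ α ∈ p.support, toLex (mwt M α) ≤ toLex (mwt M α₀.1))) ∧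
    -- the standard monomial basis is adapted to `v_M`:
    (∀ (a : Lex (Fin r → ℚ)) (g : MvPolynomial (Fin n) k ⧸ I),
      g ∈ Submodule.span k {x : MvPolynomial (Fin n) k ⧸ I |
          ∃ α : Fin n →₀ ℕ, MvPolynomial.monomial α (1 : k) ∉ initialIdeal mo.le I ∧
            a ≤ toLex (mwt M α) ∧ x = Ideal.Quotient.mk I (MvPolynomial.monomial α (1 : k))} ↔
        ∃ p : MvPolynomial (Fin n) k, Ideal.Quotient.mk I p = g ∧
          ∀ α ∈ p.support, a ≤ toLex (mwt M α)) := by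
  refine ⟨?_, mem_span_standardMonomials_iff bas (fun α => toLex (mwt M α)) hbas hGR⟩
  have hrepr : (bas.repr f).support.Nonempty :=
    Finsupp.support_nonempty_iff.2 (bas.repr.map_ne_zero_iff.2 hf)
  obtain ⟨α₀, hα₀, hmin⟩ := (bas.repr f).support.exists_min_image (fun s => toLex (mwt M s.1)) hrepr
  refine ⟨α₀, Finsupp.mem_support_iff.1 hα₀, fun β hβ => hmin β (Finsupp.mem_support_iff.2 hβ),
    ⟨standardLift bas f, mk_standardLift bas hbas f, fun α hα => ?_, α₀.1, ?_, rfl⟩, ?_⟩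
  · obtain ⟨s, hs, rfl⟩ := exists_repr_of_mem_support_standardLift bas hα
    exact hmin s hs
  · rw [mem_support_iff, coeff_standardLift]
    exact Finsupp.mem_support_iff.1 hα₀
  · intro p hp
    have hp0 : p ≠ 0 := by
      rintro rfl
      exact hf (by rw [← hp, map_zero])
    obtain ⟨α, hα, hαmin⟩ :=
      p.support.exists_min_image (fun α => toLex (mwt M α)) (support_nonempty.2 hp0)
    exact ⟨α, hα, (weight_ge_on_repr_support_iff bas (fun α => toLex (mwt M α)) hbas hGR _ f).2
      ⟨p, hp, hαmin⟩ α₀ hα₀⟩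
end

section
/- Let I ⊆ k[x_1,…,x_n] be an ideal, π : k[x_1,…,x_n] → A := k[x_1,…,x_n]/I the quotient map, and M ∈ ℚ^{r×n} with columns w_1,…,w_n ∈ ℚ^r, where ℚ^r carries the lexicographic order ≻. Fix i with x_i ∉ I and set b_i = π(x_i) ≠ 0. Then: (1) there is a lift p of b_i (namely p = x_i) with ṽ_M(p) = w_i, so every value ṽ_M(p) over lifts p of b_i is ⪰-comparable and the supremum defining v_M(b_i) is ⪰ w_i; and (2) there exists a lift p ∈ k[x_1,…,x_n] of b_i with ṽ_M(p) ≻ w_i if and only if x_i ∈ in_M(I). -/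
open MvPolynomial

/-- The value `ṽ_M(p)`: the minimal `M`-weight of the support of `p` (in the lexicographic
order on `ℚ^r`), with value `⊤` for `p = 0`. -/
noncomputable def tval {k : Type} [Field k] {n r : ℕ} (M : Matrix (Fin r) (Fin n) ℚ)
    (p : MvPolynomial (Fin n) k) : WithTop (Lex (Fin r → ℚ)) :=
  (p.support.image fun α => toLex (mwt M α)).min

/-!
Under the weights `lexWeight M` (the columns `w_j` of `M` in the lexicographic group `ℚ^r`),
`ṽ_M(p)` is the lowest weight occurring in `p`, and the initial form of `p` is its weighted
homogeneous component of that weight.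

If a lift `p` of `b_i` has `ṽ_M(p) ≻ w_i`, then `x_i - p ∈ I` still has value `w_i`, and its
initial form is `x_i`. Conversely, the polynomials all of whose weighted homogeneous
components are initial forms of elements of `I` (or zero) form an ideal containing every initial
form, hence `in_M(I)`. For `x_i ∈ in_M(I)` this yields `f ∈ I` with `ṽ_M(f) ⪰ w_i` whose
`w_i`-component is `x_i`, and `x_i - f` is a lift of `b_i` of value `≻ w_i`.
-/

namespace MvPolynomial

attribute [local instance] weightedGradedAlgebra in
theorem IsWeightedHomogeneous.weightedHomogeneousComponent_add_mul {σ R M : Type*}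
    [CommSemiring R] [AddCancelCommMonoid M] {w : σ → M} {p : MvPolynomial σ R} {i : M}
    (hp : p.IsWeightedHomogeneous w i) (j : M) (q : MvPolynomial σ R) :
    weightedHomogeneousComponent w (i + j) (p * q) = p * weightedHomogeneousComponent w j q := by
  classical
  have := DirectSum.coe_decompose_mul_add_of_left_mem (weightedHomogeneousSubmodule R w)
    (j := j) (b := q) hp
  rwa [← DirectSum.Decomposition.decompose'_eq, weightedDecomposition.decompose'_apply,
    weightedDecomposition.decompose'_apply] at this

end MvPolynomial

open Finset

section Value

variable {k : Type} [Field k] {n r : ℕ} {M : Matrix (Fin r) (Fin n) ℚ}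
  {p q : MvPolynomial (Fin n) k}

variable (M) in
def lexWeight : Fin n → Lex (Fin r → ℚ) := fun j => toLex fun l => M l j

variable (M) in
theorem weight_lexWeight (α : Fin n →₀ ℕ) :
    Finsupp.weight (lexWeight M) α = toLex (mwt M α) := by
  rw [Finsupp.weight_apply, Finsupp.sum_fintype _ _ (by simp)]
  funext l
  change (∑ j, α j • (fun l => M l j) : Fin r → ℚ) l = _
  simp [mwt, Finset.sum_apply, mul_comm]

theorem tval_eq_min_image_weight :
    tval M p = (p.support.image (Finsupp.weight (lexWeight M))).min := by
  simp only [tval, ← weight_lexWeight]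

theorem tval_eq_top_iff : tval M p = ⊤ ↔ p = 0 := by
  simp [tval_eq_min_image_weight]

theorem tval_zero : tval M (0 : MvPolynomial (Fin n) k) = ⊤ :=
  tval_eq_top_iff.mpr rfl

theorem tval_le {α : Fin n →₀ ℕ} (hα : α ∈ p.support) :
    tval M p ≤ Finsupp.weight (lexWeight M) α := by
  rw [tval_eq_min_image_weight]
  exact min_le (mem_image_of_mem _ hα)

theorem le_tval_iff {m : WithTop (Lex (Fin r → ℚ))} :
    m ≤ tval M p ↔ ∀ α ∈ p.support, m ≤ Finsupp.weight (lexWeight M) α := by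
  simp [tval_eq_min_image_weight, Finset.le_min_iff]

theorem exists_mem_support_weight_eq_of_tval_eq {v : Lex (Fin r → ℚ)} (h : tval M p = v) :
    ∃ α ∈ p.support, Finsupp.weight (lexWeight M) α = v := by
  rw [tval_eq_min_image_weight] at h
  simpa using mem_of_min h

theorem lt_tval_iff {w : Lex (Fin r → ℚ)} :
    w < tval M p ↔ ∀ α ∈ p.support, w < Finsupp.weight (lexWeight M) α := by
  refine ⟨fun h α hα => WithTop.coe_lt_coe.mp (h.trans_le (tval_le hα)), fun h => ?_⟩
  rcases eq_or_ne (tval M p) ⊤ with hp | hp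
  · exact hp ▸ WithTop.coe_lt_top w
  · obtain ⟨v, hv⟩ := WithTop.ne_top_iff_exists.mp hp
    obtain ⟨α, hα, rfl⟩ := exists_mem_support_weight_eq_of_tval_eq hv.symm
    exact hv ▸ WithTop.coe_lt_coe.mpr (h α hα)

theorem tval_neg : tval M (-p) = tval M p := by
  simp [tval, support_neg]

theorem min_le_tval_add : min (tval M p) (tval M q) ≤ tval M (p + q) :=
  le_tval_iff.mpr fun _ hα => (mem_union.mp (support_add hα)).elim
    (fun h => (min_le_left _ _).trans (tval_le h))
    (fun h => (min_le_right _ _).trans (tval_le h))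

theorem min_le_tval_sub : min (tval M p) (tval M q) ≤ tval M (p - q) := by
  simpa [sub_eq_add_neg, tval_neg] using min_le_tval_add (p := p) (q := -q)

theorem tval_add_eq_left_of_lt (h : tval M p < tval M q) : tval M (p + q) = tval M p := by
  obtain ⟨v, hv⟩ := WithTop.ne_top_iff_exists.mp h.ne_top
  obtain ⟨α, hα, hαv⟩ := exists_mem_support_weight_eq_of_tval_eq hv.symm
  have hq : coeff α q = 0 :=
    notMem_support_iff.mp fun hαq => (tval_le hαq).not_gt (hαv ▸ hv ▸ h)
  refine le_antisymm ?_ ((le_min le_rfl h.le).trans min_le_tval_add)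
  rw [← hv, ← hαv]
  exact tval_le (by simpa [hq] using hα)

theorem tval_sub_eq_left_of_lt (h : tval M p < tval M q) : tval M (p - q) = tval M p := by
  rw [sub_eq_add_neg]
  exact tval_add_eq_left_of_lt (by rwa [tval_neg])

theorem add_le_tval_mul : tval M p + tval M q ≤ tval M (p * q) :=
  le_tval_iff.mpr fun _ hα => by
    obtain ⟨β, hβ, γ, hγ, rfl⟩ := mem_add.mp (support_mul p q hα)
    rw [map_add, WithTop.coe_add]
    exact add_le_add (tval_le hβ) (tval_le hγ)

theorem MvPolynomial.IsWeightedHomogeneous.le_tval {v : Lex (Fin r → ℚ)}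
    (hp : p.IsWeightedHomogeneous (lexWeight M) v) : v ≤ tval M p :=
  le_tval_iff.mpr fun _ hα => WithTop.coe_le_coe.mpr (hp (mem_support_iff.mp hα)).ge

variable (M) in
theorem tval_X (i : Fin n) : tval M (X i : MvPolynomial (Fin n) k) = lexWeight M i :=
  le_antisymm
    ((tval_le (α := Finsupp.single i 1) (by simp)).trans_eq (by simp [Finsupp.weight_single]))
    (isWeightedHomogeneous_X k (lexWeight M) i).le_tval

theorem lt_tval_iff_le_and_weightedHomogeneousComponent_eq_zero {w : Lex (Fin r → ℚ)} :
    w < tval M p ↔ w ≤ tval M p ∧ weightedHomogeneousComponent (lexWeight M) w p = 0 := by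
  classical
  rw [lt_tval_iff, le_tval_iff, ← support_eq_empty, support_weightedHomogeneousComponent,
    filter_eq_empty_iff, ← forall₂_and]
  exact forall₂_congr fun _ _ =>
    lt_iff_le_and_ne.trans (and_congr WithTop.coe_le_coe.symm ne_comm)

theorem initialForm_eq_weightedHomogeneousComponent {w : Lex (Fin r → ℚ)} (h : tval M p = w) :
    initialForm (mLe M) p = weightedHomogeneousComponent (lexWeight M) w p := by
  classical
  rw [initialForm, weightedHomogeneousComponent_apply]
  refine sum_congr (ext fun α => ?_) fun _ _ => rfl
  simp only [mem_filter]
  refine and_congr_right fun hα => ?_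
  obtain ⟨γ, hγ, hγw⟩ := exists_mem_support_weight_eq_of_tval_eq h
  have hmin := le_tval_iff.mp h.ge
  simp only [mLe, ← weight_lexWeight, WithTop.coe_le_coe] at hmin ⊢
  exact ⟨fun hall => le_antisymm (hγw ▸ hall γ hγ) (hmin α hα),
    fun hα β hβ => hα ▸ hmin β hβ⟩

end Value

section InitialIdeal

variable {k : Type} [Field k] {n r : ℕ} {M : Matrix (Fin r) (Fin n) ℚ}
  {I : Ideal (MvPolynomial (Fin n) k)} {f g : MvPolynomial (Fin n) k}

variable (M I) in
/-- Every weighted homogeneous component of `g` is zero or the initial form of an element of `I`: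
the weight-`w` component of some `f ∈ I` with `ṽ_M(f) ⪰ w`. -/
def HasInitialComponents (g : MvPolynomial (Fin n) k) : Prop :=
  ∀ w : Lex (Fin r → ℚ), ∃ f ∈ I, w ≤ tval M f ∧
    weightedHomogeneousComponent (lexWeight M) w f = weightedHomogeneousComponent (lexWeight M) w g

theorem hasInitialComponents_zero : HasInitialComponents M I 0 :=
  fun _ => ⟨0, I.zero_mem, le_top.trans_eq tval_zero.symm, rfl⟩

theorem HasInitialComponents.add {g' : MvPolynomial (Fin n) k} (hg : HasInitialComponents M I g)
    (hg' : HasInitialComponents M I g') : HasInitialComponents M I (g + g') := by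
  intro w
  obtain ⟨f, hf, hle, hc⟩ := hg w
  obtain ⟨f', hf', hle', hc'⟩ := hg' w
  exact ⟨f + f', I.add_mem hf hf', (le_min hle hle').trans min_le_tval_add,
    by rw [map_add, map_add, hc, hc']⟩

theorem HasInitialComponents.mul_of_isWeightedHomogeneous {p : MvPolynomial (Fin n) k}
    {v : Lex (Fin r → ℚ)} (hp : p.IsWeightedHomogeneous (lexWeight M) v)
    (hg : HasInitialComponents M I g) : HasInitialComponents M I (p * g) := by
  intro w
  obtain ⟨f, hf, hle, hc⟩ := hg (w - v)
  refine ⟨p * f, I.mul_mem_left p hf, ?_, ?_⟩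
  · calc (w : WithTop (Lex (Fin r → ℚ)))
      _ = v + ↑(w - v) := by rw [← WithTop.coe_add, add_sub_cancel]
      _ ≤ tval M p + tval M f := add_le_add hp.le_tval hle
      _ ≤ tval M (p * f) := add_le_tval_mul
  · rw [← add_sub_cancel v w, hp.weightedHomogeneousComponent_add_mul,
      hp.weightedHomogeneousComponent_add_mul, hc]

theorem HasInitialComponents.mul_left (q : MvPolynomial (Fin n) k)
    (hg : HasInitialComponents M I g) : HasInitialComponents M I (q * g) := by
  induction q using MvPolynomial.induction_on' with
  | monomial β c =>
    exact hg.mul_of_isWeightedHomogeneous (isWeightedHomogeneous_monomial _ _ _ rfl)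
  | add q q' hq hq' => rw [add_mul]; exact hq.add hq'

theorem hasInitialComponents_weightedHomogeneousComponent {v : Lex (Fin r → ℚ)} (hf : f ∈ I)
    (hv : v ≤ tval M f) :
    HasInitialComponents M I (weightedHomogeneousComponent (lexWeight M) v f) := by
  have hhom := weightedHomogeneousComponent_isWeightedHomogeneous (w := lexWeight M) v f
  intro w
  by_cases hw : w = v
  · exact ⟨f, hf, hw ▸ hv, by rw [hw, weightedHomogeneousComponent_eq_self hhom]⟩
  · exact ⟨0, I.zero_mem, le_top.trans_eq tval_zero.symm,
      by rw [map_zero, hhom.weightedHomogeneousComponent_ne w hw]⟩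

theorem HasInitialComponents.of_mem_initialIdeal (hg : g ∈ initialIdeal (mLe M) I) :
    HasInitialComponents M I g := by
  induction hg using Submodule.span_induction with
  | mem g hg =>
    obtain ⟨f, hf, hf0, rfl⟩ := hg
    obtain ⟨v, hv⟩ := WithTop.ne_top_iff_exists.mp (mt tval_eq_top_iff.mp hf0)
    rw [initialForm_eq_weightedHomogeneousComponent hv.symm]
    exact hasInitialComponents_weightedHomogeneousComponent hf hv.le
  | zero => exact hasInitialComponents_zero
  | add _ _ _ _ hg hg' => exact hg.add hg'
  | smul q _ _ hg => exact hg.mul_left q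

end InitialIdeal

theorem stmt_15_general {k : Type} [Field k] {n r : ℕ}
    (I : Ideal (MvPolynomial (Fin n) k)) (M : Matrix (Fin r) (Fin n) ℚ)
    (i : Fin n) :
    tval M (MvPolynomial.X i : MvPolynomial (Fin n) k) =
        ((toLex fun l => M l i : Lex (Fin r → ℚ)) : WithTop (Lex (Fin r → ℚ))) ∧
    ((∃ p : MvPolynomial (Fin n) k,
        Ideal.Quotient.mk I p = Ideal.Quotient.mk I (MvPolynomial.X i) ∧
        ((toLex fun l => M l i : Lex (Fin r → ℚ)) : WithTop (Lex (Fin r → ℚ))) < tval M p) ↔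
      (MvPolynomial.X i : MvPolynomial (Fin n) k) ∈ initialIdeal (mLe M) I) := by
  change tval M (X i) = lexWeight M i ∧
    ((∃ p, _ ∧ (lexWeight M i : WithTop (Lex (Fin r → ℚ))) < tval M p) ↔ _)
  have hX : weightedHomogeneousComponent (lexWeight M) (lexWeight M i) (X i) =
      (X i : MvPolynomial (Fin n) k) :=
    weightedHomogeneousComponent_eq_self (isWeightedHomogeneous_X k _ i)
  refine ⟨tval_X M i, ⟨?_, fun hXI => ?_⟩⟩
  · rintro ⟨p, hp, hlt⟩
    have hval : tval M (X i - p) = lexWeight M i :=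
      (tval_sub_eq_left_of_lt ((tval_X M i).trans_lt hlt)).trans (tval_X M i)
    have hcomp : weightedHomogeneousComponent (lexWeight M) (lexWeight M i) (X i - p) = X i := by
      rw [map_sub, hX, (lt_tval_iff_le_and_weightedHomogeneousComponent_eq_zero.mp hlt).2,
        sub_zero]
    refine Ideal.subset_span ⟨X i - p, Ideal.Quotient.eq.mp hp.symm, ?_, ?_⟩
    · intro h
      simp [h, tval_zero] at hval
    · rw [initialForm_eq_weightedHomogeneousComponent hval, hcomp]
  · obtain ⟨f, hf, hle, hcomp⟩ := HasInitialComponents.of_mem_initialIdeal hXI (lexWeight M i)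
    refine ⟨X i - f, Ideal.Quotient.eq.mpr (by simpa using I.neg_mem hf), ?_⟩
    rw [lt_tval_iff_le_and_weightedHomogeneousComponent_eq_zero]
    exact ⟨(le_min (tval_X M i).ge hle).trans min_le_tval_sub, by rw [map_sub, hcomp, sub_self]⟩

/-- **Values of generators under a weight quasivaluation** (Lemma `lem-contractcalc`).
Let `b_i = π(x_i) ≠ 0` in `A = k[x]/I`.  Then (1) the lift `x_i` of `b_i` satisfies
`ṽ_M(x_i) = w_i`, the `i`-th column of `M` (so the supremum defining `v_M(b_i)` is `⪰ w_i`);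
and (2) some lift `p` of `b_i` has `ṽ_M(p) ≻ w_i` if and only if `x_i ∈ in_M(I)`. -/
theorem stmt_15 {k : Type} [Field k] {n r : ℕ}
    (I : Ideal (MvPolynomial (Fin n) k)) (M : Matrix (Fin r) (Fin n) ℚ)
    (i : Fin n) (hxi : (MvPolynomial.X i : MvPolynomial (Fin n) k) ∉ I) :
    tval M (MvPolynomial.X i : MvPolynomial (Fin n) k) =
        ((toLex fun l => M l i : Lex (Fin r → ℚ)) : WithTop (Lex (Fin r → ℚ))) ∧
    ((∃ p : MvPolynomial (Fin n) k,
        Ideal.Quotient.mk I p = Ideal.Quotient.mk I (MvPolynomial.X i) ∧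
        ((toLex fun l => M l i : Lex (Fin r → ℚ)) : WithTop (Lex (Fin r → ℚ))) < tval M p) ↔
      (MvPolynomial.X i : MvPolynomial (Fin n) k) ∈ initialIdeal (mLe M) I) :=
  stmt_15_general I M i
end

section
/- Let A be a commutative k-algebra that is an integral domain, ≻ a linear order on ℚ^r making it a linearly ordered abelian group, and v : A∖{0} → ℚ^r a valuation over k. Let b_1,…,b_n ∈ A∖{0}, let ϕ : k[x_1,…,x_n] → A be the k-algebra homomorphism with ϕ(x_i) = b_i, let I = ker(ϕ), and let M ∈ ℚ^{r×n} be the matrix whose i-th column is v(b_i). Then the initial ideal in_M(I) contains no monomial; that is, M lies in the rank-r tropical variety T^r(I). -/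
open MvPolynomial

/-!
Send `x_i` to the class of `b_i` in the associated graded ring `⨁ d, {v ≥ d} / {v > d}` of the
valuation. If `f ∈ ker ϕ` has minimal weight `d`, then `ϕ(in_M f) = -ϕ(f - in_M f)` has valuation
`> d`, because every term of `f - in_M f` has weight `> d`; so `in_M f` maps to zero, and `in_M(I)`
lies in the kernel of this map. The monomial `x^α`, however, maps to the class of `b^α`, whose
valuation is exactly `Mα`, so it is not in the kernel.
-/

open Finsupp (weight)

namespace AddValuation

variable {A Γ : Type*} [CommRing A] [AddCommGroup Γ] [LinearOrder Γ] [IsOrderedAddMonoid Γ]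

open scoped Classical in
noncomputable def ofNeZero [IsDomain A] (v : A → Γ)
    (hadd : ∀ f g : A, f ≠ 0 → g ≠ 0 → f + g ≠ 0 → min (v f) (v g) ≤ v (f + g))
    (hmul : ∀ f g : A, f ≠ 0 → g ≠ 0 → v (f * g) = v f + v g) :
    AddValuation A (WithTop Γ) :=
  AddValuation.of (fun a => if a = 0 then ⊤ else (v a : WithTop Γ)) (if_pos rfl)
    (by
      have h := hmul 1 1 one_ne_zero one_ne_zero
      rw [mul_one, left_eq_add] at h
      simp [h])
    (fun f g => by
      rcases eq_or_ne f 0 with rfl | hf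
      · simp
      rcases eq_or_ne g 0 with rfl | hg
      · simp
      rcases eq_or_ne (f + g) 0 with hfg | hfg
      · simp [hfg]
      simp only [if_neg hf, if_neg hg, if_neg hfg, ← WithTop.coe_min, WithTop.coe_le_coe]
      exact hadd f g hf hg hfg)
    (fun f g => by
      rcases eq_or_ne f 0 with rfl | hf
      · simp
      rcases eq_or_ne g 0 with rfl | hg
      · simp
      simp [hf, hg, hmul f g hf hg, WithTop.coe_add])

theorem ofNeZero_apply [IsDomain A] {v : A → Γ} {hadd hmul} {a : A} (ha : a ≠ 0) :
    ofNeZero v hadd hmul a = v a := by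
  simp [ofNeZero, ha]

variable (v : AddValuation A (WithTop Γ))

theorem map_prod {ι : Type*} (s : Finset ι) (f : ι → A) :
    v (∏ i ∈ s, f i) = ∑ i ∈ s, v (f i) := by
  classical
  induction s using Finset.induction_on with
  | empty => simp [map_one]
  | insert a s ha ih => rw [Finset.prod_insert ha, Finset.sum_insert ha, map_mul, ih]

def gtAddSubgroup (d : Γ) : AddSubgroup A where
  carrier := {a | (d : WithTop Γ) < v a}
  zero_mem' := by simp [map_zero]
  add_mem' := v.map_lt_add
  neg_mem' := by simp [map_neg]

theorem mem_gtAddSubgroup {d : Γ} {a : A} : a ∈ v.gtAddSubgroup d ↔ (d : WithTop Γ) < v a :=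
  Iff.rfl

theorem mul_mem_gtAddSubgroup {x a : A} {e d : Γ} (hx : (e : WithTop Γ) ≤ v x)
    (ha : a ∈ v.gtAddSubgroup d) : x * a ∈ v.gtAddSubgroup (e + d) := by
  rw [mem_gtAddSubgroup, map_mul, WithTop.coe_add]
  calc (e : WithTop Γ) + d < e + v a := WithTop.add_lt_add_left WithTop.coe_ne_top ha
    _ ≤ v x + v a := by gcongr

end AddValuation

namespace MvPolynomial

theorem weightedHomogeneousComponent_monomial_mul {R σ M : Type*} [CommSemiring R]
    [AddCommGroup M] {w : σ → M} (d : M) (γ : σ →₀ ℕ) (c : R) (g : MvPolynomial σ R) :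
    weightedHomogeneousComponent w d (monomial γ c * g) =
      monomial γ c * weightedHomogeneousComponent w (d - weight w γ) g := by
  classical
  ext β
  rw [coeff_weightedHomogeneousComponent, coeff_monomial_mul', coeff_monomial_mul',
    coeff_weightedHomogeneousComponent]
  by_cases hγ : γ ≤ β
  · have hβ : weight w β = weight w γ + weight w (β - γ) := by
      rw [← map_add, add_tsub_cancel_of_le hγ]
    simp only [if_pos hγ, hβ, eq_sub_iff_add_eq', mul_ite, mul_zero]
  · simp [hγ]

section GradedKernel

variable {k A Γ σ : Type*} [CommRing k] [CommRing A] [Algebra k A]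
  [AddCommGroup Γ] [LinearOrder Γ] [IsOrderedAddMonoid Γ]
  (v : AddValuation A (WithTop Γ)) {b : σ → A} {w : σ → Γ}

theorem valuation_prod_pow (hb : ∀ i, v (b i) = w i) (β : σ →₀ ℕ) :
    v (β.prod fun i e => b i ^ e) = weight w β := by
  simp only [Finsupp.prod, v.map_prod, v.map_pow, hb, Finsupp.weight_apply, Finsupp.sum,
    WithTop.coe_sum, WithTop.coe_nsmul]

theorem valuation_aeval_monomial_one (hb : ∀ i, v (b i) = w i) (β : σ →₀ ℕ) :
    v (aeval b (monomial β (1 : k))) = weight w β := by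
  rw [aeval_monomial, map_one, one_mul, valuation_prod_pow v hb]

theorem weight_le_valuation_aeval_monomial (hb : ∀ i, v (b i) = w i)
    (hk : ∀ c : k, 0 ≤ v (algebraMap k A c)) (β : σ →₀ ℕ) (c : k) :
    (weight w β : WithTop Γ) ≤ v (aeval b (monomial β c)) := by
  rw [aeval_monomial, v.map_mul, valuation_prod_pow v hb]
  exact le_add_of_nonneg_left (hk c)

theorem aeval_mem_gtAddSubgroup (hb : ∀ i, v (b i) = w i)
    (hk : ∀ c : k, 0 ≤ v (algebraMap k A c)) {g : MvPolynomial σ k} {d : Γ}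
    (hg : ∀ β ∈ g.support, d < weight w β) : aeval b g ∈ v.gtAddSubgroup d := by
  rw [g.as_sum, map_sum]
  refine sum_mem fun β hβ => ?_
  exact (WithTop.coe_lt_coe.2 (hg β hβ)).trans_le
    (weight_le_valuation_aeval_monomial v hb hk β _)

/-- The kernel of `x_i ↦ [b_i]` into the associated graded ring `⨁ d, {v ≥ d} / {v > d}` of `v`,
described without constructing that ring. -/
def gradedKernel (hb : ∀ i, v (b i) = w i) (hk : ∀ c : k, 0 ≤ v (algebraMap k A c)) :
    Ideal (MvPolynomial σ k) where
  carrier := {g | ∀ d, aeval b (weightedHomogeneousComponent w d g) ∈ v.gtAddSubgroup d}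
  add_mem' hf hg d := by simpa only [map_add] using add_mem (hf d) (hg d)
  zero_mem' d := by simpa only [map_zero] using zero_mem (v.gtAddSubgroup d)
  smul_mem' p g hg := by
    induction p using MvPolynomial.induction_on' with
    | monomial γ c =>
      intro d
      rw [smul_eq_mul, weightedHomogeneousComponent_monomial_mul, map_mul]
      simpa using v.mul_mem_gtAddSubgroup (weight_le_valuation_aeval_monomial v hb hk γ c)
        (hg (d - weight w γ))
    | add p q hp hq =>
      intro d
      rw [add_smul, map_add, map_add]
      exact add_mem (hp d) (hq d)

theorem monomial_one_notMem_gradedKernel (hb : ∀ i, v (b i) = w i)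
    (hk : ∀ c : k, 0 ≤ v (algebraMap k A c)) (α : σ →₀ ℕ) :
    monomial α (1 : k) ∉ gradedKernel v hb hk := by
  intro h
  have := h (weight w α)
  rw [(isWeightedHomogeneous_monomial w α 1 rfl).weightedHomogeneousComponent_same,
    AddValuation.mem_gtAddSubgroup, valuation_aeval_monomial_one v hb] at this
  exact lt_irrefl _ this

end GradedKernel

section InitialForm

variable {k : Type} [Field k] {n : ℕ}

open scoped Classical in
theorem coeff_initialForm (le : (Fin n →₀ ℕ) → (Fin n →₀ ℕ) → Prop)
    (f : MvPolynomial (Fin n) k) (β : Fin n →₀ ℕ) :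
    coeff β (initialForm le f) = if ∀ γ ∈ f.support, le β γ then coeff β f else 0 := by
  rw [initialForm, coeff_sum]
  simp only [coeff_monomial]
  rw [Finset.sum_ite_eq']
  by_cases hβ : β ∈ f.support
  · simp [Finset.mem_filter, hβ]
  · simp [Finset.mem_filter, hβ, notMem_support_iff.1 hβ]

theorem exists_initialForm_eq_weightedHomogeneousComponent {Γ : Type*} [AddCommMonoid Γ]
    [LinearOrder Γ] (w : Fin n → Γ) {f : MvPolynomial (Fin n) k} (hf : f ≠ 0) :
    ∃ d, (∀ β ∈ f.support, d ≤ weight w β) ∧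
      initialForm (fun α β => weight w α ≤ weight w β) f = weightedHomogeneousComponent w d f := by
  classical
  obtain ⟨α₀, hα₀, hmin⟩ := f.support.exists_min_image (weight w) (support_nonempty.2 hf)
  refine ⟨weight w α₀, hmin, ?_⟩
  ext β
  rw [coeff_initialForm, coeff_weightedHomogeneousComponent]
  by_cases hβ : β ∈ f.support
  · congr 1
    exact propext ⟨fun h => le_antisymm (h α₀ hα₀) (hmin β hβ), fun h γ hγ => h ▸ hmin γ hγ⟩
  · simp [notMem_support_iff.1 hβ]

variable {A Γ : Type*} [CommRing A] [Algebra k A]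
  [AddCommGroup Γ] [LinearOrder Γ] [IsOrderedAddMonoid Γ]
  (v : AddValuation A (WithTop Γ)) {b : Fin n → A} {w : Fin n → Γ}

theorem initialForm_mem_gradedKernel (hb : ∀ i, v (b i) = w i)
    (hk : ∀ c : k, 0 ≤ v (algebraMap k A c)) {f : MvPolynomial (Fin n) k}
    (hf : f ∈ RingHom.ker (aeval b)) (hf0 : f ≠ 0) :
    initialForm (fun α β => weight w α ≤ weight w β) f ∈ gradedKernel v hb hk := by
  classical
  obtain ⟨d₀, hd₀, hin⟩ := exists_initialForm_eq_weightedHomogeneousComponent w hf0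
  rw [hin]
  intro d
  rw [weightedHomogeneousComponent_of_mem (weightedHomogeneousComponent_mem w f d₀)]
  split_ifs with hd
  · subst hd
    have hrest : ∀ β ∈ (f - weightedHomogeneousComponent w d f).support, d < weight w β := by
      intro β hβ
      rw [mem_support_iff, coeff_sub, coeff_weightedHomogeneousComponent] at hβ
      split_ifs at hβ with h
      · simp at hβ
      · exact (hd₀ β (mem_support_iff.2 (by simpa using hβ))).lt_of_ne' h
    have := neg_mem (aeval_mem_gtAddSubgroup v hb hk hrest)
    rwa [map_sub, RingHom.mem_ker.1 hf, zero_sub, neg_neg] at this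
  · simpa only [map_zero] using zero_mem (v.gtAddSubgroup d)

theorem monomial_notMem_initialIdeal_ker_aeval (hb : ∀ i, v (b i) = w i)
    (hk : ∀ c : k, 0 ≤ v (algebraMap k A c)) (α : Fin n →₀ ℕ) :
    monomial α (1 : k) ∉ initialIdeal (fun α β => weight w α ≤ weight w β)
      (RingHom.ker (aeval b : MvPolynomial (Fin n) k →ₐ[k] A)) := by
  refine fun h => monomial_one_notMem_gradedKernel v hb hk α (Ideal.span_le.2 ?_ h)
  rintro _ ⟨f, hf, hf0, rfl⟩
  exact initialForm_mem_gradedKernel v hb hk hf hf0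

end InitialForm

end MvPolynomial

/-- **Higher rank tropicalization of a valuation** (Proposition `prop-values-in-trop-var`).
Let `v` be a valuation over `k` on a domain `A` with values in `ℚ^r`, where `ℚ^r` carries a
linear order `ord` making it a linearly ordered abelian group.  Let `b_1, …, b_n` be nonzero
elements of `A`, `I` the kernel of the presentation `x_i ↦ b_i`, and `M` the matrix whose
`i`-th column is `v(b_i)`.  Then `in_M(I)` contains no monomial, i.e. `M ∈ T^r(I)`. -/
theorem stmt_16 {k A : Type} [Field k] [CommRing A] [IsDomain A] [Algebra k A]
    {n r : ℕ} (ord : LinearOrder (Fin r → ℚ))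
    (hord : ∀ a b c : Fin r → ℚ, ord.le a b → ord.le (a + c) (b + c))
    (v : A → Fin r → ℚ)
    (hadd : ∀ f g : A, f ≠ 0 → g ≠ 0 → f + g ≠ 0 →
      ord.le (v f) (v (f + g)) ∨ ord.le (v g) (v (f + g)))
    (hmul : ∀ f g : A, f ≠ 0 → g ≠ 0 → v (f * g) = v f + v g)
    (hscal : ∀ (c : k) (f : A), c ≠ 0 → f ≠ 0 → v (algebraMap k A c * f) = v f)
    (b : Fin n → A) (hb : ∀ i, b i ≠ 0)
    (M : Matrix (Fin r) (Fin n) ℚ) (hM : ∀ i l, M l i = v (b i) l) :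
    ∀ α : Fin n →₀ ℕ,
      MvPolynomial.monomial α (1 : k) ∉
        initialIdeal (fun α β => ord.le (mwt M α) (mwt M β))
          (RingHom.ker (MvPolynomial.aeval b : MvPolynomial (Fin n) k →ₐ[k] A)) := by
  -- `Fin r → ℚ` already carries the componentwise order; the local `Preorder` makes `ord` win.
  let := ord
  let : Preorder (Fin r → ℚ) := ord.toPreorder
  have : IsOrderedAddMonoid (Fin r → ℚ) := { add_le_add_left := fun a b h c => hord a b c h }
  let v' := AddValuation.ofNeZero v (fun f g hf hg hfg => min_le_iff.2 (hadd f g hf hg hfg)) hmul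
  have hv' : ∀ {a : A}, a ≠ 0 → v' a = v a := AddValuation.ofNeZero_apply
  have hk : ∀ c : k, 0 ≤ v' (algebraMap k A c) := by
    intro c
    rcases eq_or_ne c 0 with rfl | hc
    · simp
    · have hc' : algebraMap k A c ≠ 0 := (map_ne_zero _).2 hc
      rw [hv' hc', ← mul_one (algebraMap k A c), hscal c 1 hc one_ne_zero, ← hv' one_ne_zero,
        v'.map_one]
  have hwt : mwt M = weight fun i => v (b i) := by
    funext α l
    simp [mwt, Finsupp.weight_eq_sum, hM, mul_comm]
  rw [hwt]
  exact MvPolynomial.monomial_notMem_initialIdeal_ker_aeval v' (fun i => hv' (hb i)) hk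
end
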